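/- Strict diagonal dominance and invertibility of the implicit temperature matrix M_T: Let γ > 1, let I, J ≥ 1 and index cells by (i,j) ∈ Fin I × Fin J. Let Δt > 0, let Δx_i > 0, Δy_j > 0, interface spacings Δx_{i+1/2} > 0 and Δy_{j+1/2} > 0, interface heat conductivities κˣ_{i+1/2,j} > 0, κʸ_{i,j+1/2} > 0, interface weights ωˣ_{i+1/2,j} ∈ (0,1], ωʸ_{i,j+1/2} ∈ (0,1], and cell densities ρ_{i,j} > 0 be given. Define M_T ∈ Matrix (Fin I × Fin J) (Fin I × Fin J) ℝ by: M_T[(i,j),(i∓1,j)] = κˣ_{i∓1/2,j}·Δt·ωˣ_{i∓1/2,j}/(2·Δx_i·Δx_{i∓1/2}) whenever i∓1 ∈ Fin I; M_T[(i,j),(i,j∓1)] = κʸ_{i,j∓1/2}·Δt·ωʸ_{i,j∓1/2}/(2·Δy_j·Δy_{j∓1/2}) whenever j∓1 ∈ Fin J; M_T[(i,j),(i,j)] = ρ_{i,j}/(γ−1) plus the sum of the off-diagonal entries of row (i,j) just listed; and M_T = 0 elsewhere. Then M_T is strictly row diagonally dominant, i.e. |M_T[k,k]| > Σ_{l ≠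 k} |M_T[k,l]| for every row k, and consequently M_T is invertible. -/

import Mathlib

/-!
Every row of `M_T` has nonnegative off-diagonal entries, and its diagonal entry is
`ρ_{i,j}/(γ-1)` plus exactly the sum of those entries (a coupling appears on the diagonal
precisely when the corresponding neighbour is a cell of the grid). So each row exceeds
strict diagonal dominance by `ρ_{i,j}/(γ-1) > 0`, and the Levy–Desplanques theorem
gives `det M_T ≠ 0`.
-/

open Finset

theorem Fin.sum_ite_val_eq {M : Type*} [AddCommMonoid M] (n a : ℕ) (c : M) :
    ∑ x : Fin n, (if (x : ℕ) = a then c else 0) = if a < n then c else 0 := by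
  split_ifs with ha
  · simpa [Fin.ext_iff] using Fintype.sum_ite_eq' (⟨a, ha⟩ : Fin n) (fun _ => c)
  · exact sum_eq_zero fun x _ => if_neg (by omega)

theorem Fin.sum_ite_val_add_one_eq {M : Type*} [AddCommMonoid M] {n a : ℕ} (ha : a ≤ n) (c : M) :
    ∑ x : Fin n, (if (x : ℕ) + 1 = a then c else 0) = if 0 < a then c else 0 := by
  cases a with
  | zero => simp
  | succ a => simpa [show a < n from ha] using Fin.sum_ite_val_eq n a c

theorem Matrix.sum_abs_lt_abs_diag_of_nonneg_of_sum_lt {n : Type*} [Fintype n] [DecidableEq n]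
    (A : Matrix n n ℝ) (k : n) (hoff : ∀ l ≠ k, 0 ≤ A k l)
    (hlt : ∑ l ∈ univ.erase k, A k l < A k k) :
    ∑ l ∈ univ.erase k, |A k l| < |A k k| := by
  rw [sum_congr rfl fun l hl => abs_of_nonneg (hoff l (ne_of_mem_erase hl))]
  exact hlt.trans_le (le_abs_self _)

def fivePointStencil (I J : ℕ) (d cL cR cD cU : ℕ → ℕ → ℝ) :
    Matrix (Fin I × Fin J) (Fin I × Fin J) ℝ :=
  Matrix.of fun k l =>
    let i := (k.1 : ℕ); let j := (k.2 : ℕ)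
    let i' := (l.1 : ℕ); let j' := (l.2 : ℕ)
    if i' = i ∧ j' = j then
      d i j + (if 0 < i then cL i j else 0) + (if i + 1 < I then cR i j else 0)
        + (if 0 < j then cD i j else 0) + (if j + 1 < J then cU i j else 0)
    else if i' + 1 = i ∧ j' = j then cL i j
    else if i' = i + 1 ∧ j' = j then cR i j
    else if i' = i ∧ j' + 1 = j then cD i j
    else if i' = i ∧ j' = j + 1 then cU i j
    else 0

namespace fivePointStencil

variable {I J : ℕ} {d cL cR cD cU : ℕ → ℕ → ℝ}

theorem apply_self (k : Fin I × Fin J) :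
    fivePointStencil I J d cL cR cD cU k k
      = d k.1 k.2 + (if 0 < (k.1 : ℕ) then cL k.1 k.2 else 0)
        + (if (k.1 : ℕ) + 1 < I then cR k.1 k.2 else 0)
        + (if 0 < (k.2 : ℕ) then cD k.1 k.2 else 0)
        + (if (k.2 : ℕ) + 1 < J then cU k.1 k.2 else 0) := by
  simp [fivePointStencil]

/-- Off the diagonal, the four neighbour conditions are mutually exclusive, so the nested
`if` is a sum of indicators. -/
theorem apply_of_ne {k l : Fin I × Fin J} (hkl : l ≠ k) :
    fivePointStencil I J d cL cR cD cU k l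
      = (if (l.1 : ℕ) + 1 = k.1 ∧ (l.2 : ℕ) = k.2 then cL k.1 k.2 else 0)
        + (if (l.1 : ℕ) = k.1 + 1 ∧ (l.2 : ℕ) = k.2 then cR k.1 k.2 else 0)
        + (if (l.1 : ℕ) = k.1 ∧ (l.2 : ℕ) + 1 = k.2 then cD k.1 k.2 else 0)
        + (if (l.1 : ℕ) = k.1 ∧ (l.2 : ℕ) = k.2 + 1 then cU k.1 k.2 else 0) := by
  have hkl' : ¬((l.1 : ℕ) = k.1 ∧ (l.2 : ℕ) = k.2) := fun h =>
    hkl (Prod.ext (Fin.ext h.1) (Fin.ext h.2))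
  simp only [fivePointStencil, Matrix.of_apply, if_neg hkl']
  split_ifs <;> first | omega | simp

theorem sum_erase_apply (k : Fin I × Fin J) :
    ∑ l ∈ univ.erase k, fivePointStencil I J d cL cR cD cU k l
      = (if 0 < (k.1 : ℕ) then cL k.1 k.2 else 0)
        + (if (k.1 : ℕ) + 1 < I then cR k.1 k.2 else 0)
        + (if 0 < (k.2 : ℕ) then cD k.1 k.2 else 0)
        + (if (k.2 : ℕ) + 1 < J then cU k.1 k.2 else 0) := by
  rw [sum_congr rfl fun l hl => apply_of_ne (ne_of_mem_erase hl),
    sum_erase _ (by simp), sum_add_distrib, sum_add_distrib, sum_add_distrib]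
  simp only [Fintype.sum_prod_type, ite_and, sum_ite_irrel, sum_const_zero, Fin.sum_ite_val_eq,
    Fin.sum_ite_val_add_one_eq k.1.is_lt.le, Fin.sum_ite_val_add_one_eq k.2.is_lt.le, k.1.is_lt,
    k.2.is_lt, if_true]

theorem apply_self_eq_add_sum_erase (k : Fin I × Fin J) :
    fivePointStencil I J d cL cR cD cU k k
      = d k.1 k.2 + ∑ l ∈ univ.erase k, fivePointStencil I J d cL cR cD cU k l := by
  rw [apply_self, sum_erase_apply]
  ring

theorem sum_abs_lt_abs_diag (hd : ∀ i j, 0 < d i j) (hL : ∀ i j, 0 ≤ cL i j)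
    (hR : ∀ i j, 0 ≤ cR i j) (hD : ∀ i j, 0 ≤ cD i j) (hU : ∀ i j, 0 ≤ cU i j)
    (k : Fin I × Fin J) :
    ∑ l ∈ univ.erase k, |fivePointStencil I J d cL cR cD cU k l|
      < |fivePointStencil I J d cL cR cD cU k k| := by
  refine Matrix.sum_abs_lt_abs_diag_of_nonneg_of_sum_lt _ k (fun l hl => ?_) ?_
  · specialize hL k.1 k.2; specialize hR k.1 k.2; specialize hD k.1 k.2; specialize hU k.1 k.2
    rw [apply_of_ne hl]
    positivity
  · rw [apply_self_eq_add_sum_erase k]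
    exact lt_add_of_pos_left _ (hd k.1 k.2)

end fivePointStencil

/-- Cells are indexed by `Fin I × Fin J`; `κx i j`, `ωx i j`, `Δxh i` are the quantities at the
x-interface `i+1/2` between cells `i` and `i+1` (so the interface `i−1/2` has index `i-1`), and
similarly in the y-direction. -/
theorem MT_strictly_diagonally_dominant_and_invertible_general
    (γ : ℝ) (hγ : 1 < γ)
    (I J : ℕ)
    (Δt : ℝ) (hΔt : 0 < Δt)
    (Δx Δxh Δy Δyh : ℕ → ℝ)
    (hΔx : ∀ i, 0 < Δx i) (hΔxh : ∀ i, 0 < Δxh i)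
    (hΔy : ∀ j, 0 < Δy j) (hΔyh : ∀ j, 0 < Δyh j)
    (κx κy ωx ωy ρc : ℕ → ℕ → ℝ)
    (hκx : ∀ i j, 0 < κx i j) (hκy : ∀ i j, 0 < κy i j)
    (hωx : ∀ i j, 0 < ωx i j ∧ ωx i j ≤ 1)
    (hωy : ∀ i j, 0 < ωy i j ∧ ωy i j ≤ 1)
    (hρ : ∀ i j, 0 < ρc i j)
    (M : Matrix (Fin I × Fin J) (Fin I × Fin J) ℝ)
    (hM : ∀ k l : Fin I × Fin J,
      M k l =
        (let i := (k.1 : ℕ); let j := (k.2 : ℕ)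
         let i' := (l.1 : ℕ); let j' := (l.2 : ℕ)
         let cL : ℝ := κx (i-1) j * Δt * ωx (i-1) j / (2 * Δx i * Δxh (i-1))
         let cR : ℝ := κx i j * Δt * ωx i j / (2 * Δx i * Δxh i)
         let cD : ℝ := κy i (j-1) * Δt * ωy i (j-1) / (2 * Δy j * Δyh (j-1))
         let cU : ℝ := κy i j * Δt * ωy i j / (2 * Δy j * Δyh j)
         if i' = i ∧ j' = j then
           ρc i j / (γ - 1)
                  + (if 0 < i then cL else 0) + (if i + 1 < I then cR else 0)
                  + (if 0 < j then cD else 0) + (if j + 1 < J then cU else 0)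
         else if i' + 1 = i ∧ j' = j then cL
         else if i' = i + 1 ∧ j' = j then cR
         else if i' = i ∧ j' + 1 = j then cD
         else if i' = i ∧ j' = j + 1 then cU
         else 0)) :
    (∀ k : Fin I × Fin J, ∑ l ∈ Finset.univ.erase k, |M k l| < |M k k|)
    ∧ IsUnit M := by
  suffices hdom : ∀ k, ∑ l ∈ univ.erase k, |M k l| < |M k k| from
    ⟨hdom, (Matrix.isUnit_iff_isUnit_det _).2
      (det_ne_zero_of_sum_row_lt_diag (by simpa only [Real.norm_eq_abs] using hdom)).isUnit⟩
  have hcoeff {κ ω Δ Δh : ℝ} (hκ : 0 < κ) (hω : 0 < ω) (hΔ : 0 < Δ) (hΔh : 0 < Δh) :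
      0 ≤ κ * Δt * ω / (2 * Δ * Δh) := by positivity
  obtain rfl : M = fivePointStencil I J (fun i j => ρc i j / (γ - 1))
      (fun i j => κx (i - 1) j * Δt * ωx (i - 1) j / (2 * Δx i * Δxh (i - 1)))
      (fun i j => κx i j * Δt * ωx i j / (2 * Δx i * Δxh i))
      (fun i j => κy i (j - 1) * Δt * ωy i (j - 1) / (2 * Δy j * Δyh (j - 1)))
      (fun i j => κy i j * Δt * ωy i j / (2 * Δy j * Δyh j)) :=
    Matrix.ext hM
  exact fivePointStencil.sum_abs_lt_abs_diag (fun i j => div_pos (hρ i j) (sub_pos.2 hγ))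
    (fun i j => hcoeff (hκx _ _) (hωx _ _).1 (hΔx _) (hΔxh _))
    (fun i j => hcoeff (hκx _ _) (hωx _ _).1 (hΔx _) (hΔxh _))
    (fun i j => hcoeff (hκy _ _) (hωy _ _).1 (hΔy _) (hΔyh _))
    (fun i j => hcoeff (hκy _ _) (hωy _ _).1 (hΔy _) (hΔyh _))

/-- Strict diagonal dominance and invertibility of the implicit temperature
matrix `M_T` of the scheme.  Cells are indexed by `Fin I × Fin J`; for a cell
`(i,j)`, `κx i j`, `ωx i j`, `Δxh i` denote the quantities `κˣ_{i+1/2,j}`,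
`ωˣ_{i+1/2,j}`, `Δx_{i+1/2}` at the x-interface between cells `i` and `i+1`
(so the interface `i−1/2` corresponds to index `i-1`), and similarly in the
y-direction. -/
theorem MT_strictly_diagonally_dominant_and_invertible
    (γ : ℝ) (hγ : 1 < γ)
    (I J : ℕ) (hI : 1 ≤ I) (hJ : 1 ≤ J)
    (Δt : ℝ) (hΔt : 0 < Δt)
    (Δx Δxh Δy Δyh : ℕ → ℝ)
    (hΔx : ∀ i, 0 < Δx i) (hΔxh : ∀ i, 0 < Δxh i)
    (hΔy : ∀ j, 0 < Δy j) (hΔyh : ∀ j, 0 < Δyh j)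
    (κx κy ωx ωy ρc : ℕ → ℕ → ℝ)
    (hκx : ∀ i j, 0 < κx i j) (hκy : ∀ i j, 0 < κy i j)
    (hωx : ∀ i j, 0 < ωx i j ∧ ωx i j ≤ 1)
    (hωy : ∀ i j, 0 < ωy i j ∧ ωy i j ≤ 1)
    (hρ : ∀ i j, 0 < ρc i j)
    (M : Matrix (Fin I × Fin J) (Fin I × Fin J) ℝ)
    (hM : ∀ k l : Fin I × Fin J,
      M k l =
        (let i := (k.1 : ℕ); let j := (k.2 : ℕ)
         let i' := (l.1 : ℕ); let j' := (l.2 : ℕ)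
         let cL : ℝ := κx (i-1) j * Δt * ωx (i-1) j / (2 * Δx i * Δxh (i-1))
         let cR : ℝ := κx i j * Δt * ωx i j / (2 * Δx i * Δxh i)
         let cD : ℝ := κy i (j-1) * Δt * ωy i (j-1) / (2 * Δy j * Δyh (j-1))
         let cU : ℝ := κy i j * Δt * ωy i j / (2 * Δy j * Δyh j)
         if i' = i ∧ j' = j then
           ρc i j / (γ - 1)
                  + (if 0 < i then cL else 0) + (if i + 1 < I then cR else 0)
                  + (if 0 < j then cD else 0) + (if j + 1 < J then cU else 0)
         else if i' + 1 = i ∧ j' = j then cL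
         else if i' = i + 1 ∧ j' = j then cR
         else if i' = i ∧ j' + 1 = j then cD
         else if i' = i ∧ j' = j + 1 then cU
         else 0)) :
    (∀ k : Fin I × Fin J, ∑ l ∈ Finset.univ.erase k, |M k l| < |M k k|)
    ∧ IsUnit M :=
  MT_strictly_diagonally_dominant_and_invertible_general γ hγ I J Δt hΔt Δx Δxh Δy Δyh hΔx hΔxh hΔy
    hΔyh κx κy ωx ωy ρc hκx hκy hωx hωy hρ M hM
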